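/- If two inverse sequences of abelian groups are pro-isomorphic, then their derived limits lim¹ are isomorphic as abelian groups. -/

import Mathlib

universe u

/-- The composite bonding homomorphism `A (i + k) →+ A i` of an inverse sequence of abelian
groups `(A, lam)` (where `lam i : A (i+1) →+ A i`), written in "offset" form. -/
def bondAux (A : ℕ → Type u) [∀ i, AddCommGroup (A i)] (lam : ∀ i, A (i + 1) →+ A i) (i : ℕ) :
    ∀ k, A (i + k) →+ A i
  | 0 => AddMonoidHom.id (A i)
  | k + 1 => (bondAux A lam i k).comp (lam (i + k))

/-- The composite bonding homomorphism `λ_{i,j} : A j →+ A i` for `i ≤ j`. -/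
def bond (A : ℕ → Type u) [∀ i, AddCommGroup (A i)] (lam : ∀ i, A (i + 1) →+ A i)
    (i j : ℕ) (h : i ≤ j) : A j →+ A i :=
  (Nat.add_sub_cancel' h) ▸ bondAux A lam i (j - i)

/-- Two inverse sequences of abelian groups `(A, lam)` and `(B, mu)` are pro-isomorphic if
there are strictly increasing index sequences `ii`, `jj` and homomorphisms
`up k : B (jj k) →+ A (ii k)`, `dn k : A (ii (k+1)) →+ B (jj k)` such that `up k ∘ dn k` and
`dn k ∘ up (k+1)` are the corresponding composite bonding homomorphisms. -/
def IsProIso (A : ℕ → Type u) [∀ i, AddCommGroup (A i)] (lam : ∀ i, A (i + 1) →+ A i)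
    (B : ℕ → Type u) [∀ j, AddCommGroup (B j)] (mu : ∀ j, B (j + 1) →+ B j) : Prop :=
  ∃ (ii jj : ℕ → ℕ) (hii : StrictMono ii) (hjj : StrictMono jj)
    (up : ∀ k, B (jj k) →+ A (ii k)) (dn : ∀ k, A (ii (k + 1)) →+ B (jj k)),
    (∀ k, (up k).comp (dn k) = bond A lam (ii k) (ii (k + 1)) (hii (Nat.lt_succ_self k)).le) ∧
    (∀ k, (dn k).comp (up (k + 1)) = bond B mu (jj k) (jj (k + 1)) (hjj (Nat.lt_succ_self k)).le)

/-- The homomorphism `(g_i) ↦ (g_i - λ_{i+1}(g_{i+1}))` on the product of an inverse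
sequence of abelian groups; `lim¹` is its cokernel. -/
def delta (A : ℕ → Type u) [∀ i, AddCommGroup (A i)] (lam : ∀ i, A (i + 1) →+ A i) :
    (∀ i, A i) →+ (∀ i, A i) :=
  AddMonoidHom.mk' (fun g i => g i - lam i (g (i + 1))) (by
    intro a b
    funext i
    simp only [Pi.add_apply, map_add]
    abel)

/-- The derived limit `lim¹` of an inverse sequence of abelian groups: the quotient of
`∏ A i` by the subgroup `{(g_i - λ_{i+1} g_{i+1}) : (g_i) ∈ ∏ A i}`. -/
def lim1 (A : ℕ → Type u) [∀ i, AddCommGroup (A i)] (lam : ∀ i, A (i + 1) →+ A i) :=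
  (∀ i, A i) ⧸ (delta A lam).range

instance (A : ℕ → Type u) [∀ i, AddCommGroup (A i)] (lam : ∀ i, A (i + 1) →+ A i) :
    AddCommGroup (lim1 A lam) :=
  QuotientAddGroup.Quotient.addCommGroup _

/-!
Passing to a subsequence `A ∘ ii` does not change `lim¹`. The map `∏ A i → ∏ A (ii k)` that
pushes each block `A (ii k), …, A (ii (k+1) - 1)` down to `A (ii k)` and adds up carries the image
of `delta` into the image of the subsequence's `delta`, has extension by zero as a section, and is
injective on cokernels because a primitive of `g` can be read off from partial sums once the
collapse of `g` has a primitive.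

After passing to subsequences, a pro-isomorphism is a ladder `u k : Q k → P k`,
`d k : P (k+1) → Q k` with bonds `u ∘ d` and `d ∘ u`. On products `delta = 1 - U D` for `P`
and `delta = 1 - D U` for `Q`, so `U` and `D` induce mutually inverse maps of cokernels.
-/

section Bond

variable {A : ℕ → Type u} [∀ i, AddCommGroup (A i)] (lam : ∀ i, A (i + 1) →+ A i)

lemma bond_add_eq_bondAux (i k : ℕ) (h : i ≤ i + k) :
    bond A lam i (i + k) h = bondAux A lam i k := by
  have key : ∀ n (e : i + n = i + k), e ▸ bondAux A lam i n = bondAux A lam i k := by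
    rintro n e
    obtain rfl := Nat.add_left_cancel e
    rfl
  exact key _ _

-- A total version of `bond`, with junk value `0` when `j < i`; it avoids carrying the
-- proof of `i ≤ j` through rewrites.
noncomputable def bondOrZero (i j : ℕ) : A j →+ A i :=
  if h : i ≤ j then bond A lam i j h else 0

variable {lam}

lemma bondOrZero_of_le {i j : ℕ} (h : i ≤ j) : bondOrZero lam i j = bond A lam i j h :=
  dif_pos h

lemma bondOrZero_self (i : ℕ) : bondOrZero lam i i = AddMonoidHom.id (A i) := by
  rw [bondOrZero_of_le le_rfl]
  exact bond_add_eq_bondAux lam i 0 le_rfl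

lemma bondOrZero_succ {i j : ℕ} (h : i ≤ j) :
    bondOrZero lam i (j + 1) = (bondOrZero lam i j).comp (lam j) := by
  obtain ⟨k, rfl⟩ := Nat.exists_eq_add_of_le h
  rw [bondOrZero_of_le h, bondOrZero_of_le (h.trans (Nat.le_succ _)), bond_add_eq_bondAux]
  exact bond_add_eq_bondAux lam i (k + 1) _

lemma bondOrZero_comp {i j k : ℕ} (hij : i ≤ j) (hjk : j ≤ k) :
    (bondOrZero lam i j).comp (bondOrZero lam j k) = bondOrZero lam i k := by
  induction k, hjk using Nat.le_induction with
  | base => rw [bondOrZero_self, AddMonoidHom.comp_id]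
  | succ k hjk ih =>
    rw [bondOrZero_succ hjk, bondOrZero_succ (hij.trans hjk), ← ih, AddMonoidHom.comp_assoc]

lemma bondOrZero_bondOrZero {i j k : ℕ} (hij : i ≤ j) (hjk : j ≤ k) (x : A k) :
    bondOrZero lam i j (bondOrZero lam j k x) = bondOrZero lam i k x := by
  rw [← bondOrZero_comp hij hjk, AddMonoidHom.comp_apply]

lemma lam_bondOrZero {i j : ℕ} (h : i < j) (x : A j) :
    lam i (bondOrZero lam (i + 1) j x) = bondOrZero lam i j x := by
  rw [← bondOrZero_bondOrZero i.le_succ h, bondOrZero_succ le_rfl, bondOrZero_self,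
    AddMonoidHom.id_comp]

lemma sum_bondOrZero_delta (g : ∀ i, A i) {i n : ℕ} (hin : i ≤ n) :
    ∑ m ∈ Finset.Ico i n, bondOrZero lam i m (delta A lam g m)
      = g i - bondOrZero lam i n (g n) := by
  induction n, hin using Nat.le_induction with
  | base => simp [bondOrZero_self]
  | succ n hin ih =>
    rw [Finset.sum_Ico_succ_top hin, ih, bondOrZero_succ hin]
    simp only [delta, AddMonoidHom.mk'_apply, map_sub, AddMonoidHom.comp_apply]
    abel

end Bond

section Subsequence

variable {A : ℕ → Type u} [∀ i, AddCommGroup (A i)] {lam : ∀ i, A (i + 1) →+ A i}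
  {ii : ℕ → ℕ} {lam' : ∀ k, A (ii (k + 1)) →+ A (ii k)}

variable (lam ii) in
noncomputable def collapse : (∀ i, A i) →+ (∀ k, A (ii k)) :=
  AddMonoidHom.pi fun k =>
    ∑ m ∈ Finset.Ico (ii k) (ii (k + 1)),
      (bondOrZero lam (ii k) m).comp (Pi.evalAddMonoidHom A m)

lemma collapse_apply (g : ∀ i, A i) (k : ℕ) :
    collapse lam ii g k
      = ∑ m ∈ Finset.Ico (ii k) (ii (k + 1)), bondOrZero lam (ii k) m (g m) := by
  simp [collapse]

lemma collapse_delta (hii : Monotone ii)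
    (hlam' : ∀ k, lam' k = bondOrZero lam (ii k) (ii (k + 1))) (g : ∀ i, A i) :
    collapse lam ii (delta A lam g) = delta (fun k => A (ii k)) lam' (fun k => g (ii k)) := by
  funext k
  rw [collapse_apply, sum_bondOrZero_delta g (hii k.le_succ), ← hlam']
  rfl

open Classical in
variable (ii) in
noncomputable def extendZero (h : ∀ k, A (ii k)) : ∀ i, A i := fun m =>
  if hm : ∃ k, ii k = m then hm.choose_spec ▸ h hm.choose else 0

lemma extendZero_apply (hii : Function.Injective ii) (h : ∀ k, A (ii k)) (k : ℕ) :
    extendZero ii h (ii k) = h k := by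
  have hex : ∃ k', ii k' = ii k := ⟨k, rfl⟩
  have key : ∀ c (e : ii c = ii k), (e ▸ h c : A (ii k)) = h k := by
    rintro c e
    obtain rfl := hii e
    rfl
  rw [extendZero, dif_pos hex]
  exact key _ _

lemma extendZero_of_notMem_range {m : ℕ} (hm : m ∉ Set.range ii) (h : ∀ k, A (ii k)) :
    extendZero ii h m = 0 :=
  dif_neg (Set.mem_range.not.mp hm)

lemma collapse_extendZero (hii : StrictMono ii) (h : ∀ k, A (ii k)) :
    collapse lam ii (extendZero ii h) = h := by
  funext k
  rw [collapse_apply, Finset.sum_eq_single_of_mem (ii k) (by simp [hii k.lt_succ_self]),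
    extendZero_apply hii.injective, bondOrZero_self, AddMonoidHom.id_apply]
  rintro m hm hne
  rw [extendZero_of_notMem_range ?_, map_zero]
  rintro ⟨k', rfl⟩
  rw [Finset.mem_Ico, hii.le_iff_le, hii.lt_iff_lt, Nat.lt_succ_iff] at hm
  exact hne (congrArg ii (le_antisymm hm.2 hm.1))

-- When `δ h = collapse g`, this is independent of `k` as soon as `m ≤ ii k`, and the common
-- value is a primitive of `g` at `m`.
variable (lam ii) in
noncomputable def partialPrimitive (g : ∀ i, A i) (h : ∀ k, A (ii k)) (m k : ℕ) : A m :=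
  (∑ n ∈ Finset.Ico m (ii k), bondOrZero lam m n (g n)) + bondOrZero lam m (ii k) (h k)

lemma lam_partialPrimitive (g : ∀ i, A i) (h : ∀ k, A (ii k)) {m k : ℕ} (hmk : m < ii k) :
    lam m (partialPrimitive lam ii g h (m + 1) k) = partialPrimitive lam ii g h m k - g m := by
  have hsum : lam m (∑ n ∈ Finset.Ico (m + 1) (ii k), bondOrZero lam (m + 1) n (g n))
      = ∑ n ∈ Finset.Ico (m + 1) (ii k), bondOrZero lam m n (g n) := by
    rw [map_sum]
    exact Finset.sum_congr rfl fun n hn => lam_bondOrZero (Finset.mem_Ico.mp hn).1 _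
  rw [partialPrimitive, partialPrimitive, map_add, hsum, lam_bondOrZero hmk,
    Finset.sum_eq_sum_Ico_succ_bot hmk, bondOrZero_self, AddMonoidHom.id_apply]
  abel

lemma partialPrimitive_succ (hii : Monotone ii)
    (hlam' : ∀ k, lam' k = bondOrZero lam (ii k) (ii (k + 1))) {g : ∀ i, A i}
    {h : ∀ k, A (ii k)} (hgh : delta (fun k => A (ii k)) lam' h = collapse lam ii g)
    {m k : ℕ} (hmk : m ≤ ii k) :
    partialPrimitive lam ii g h m (k + 1) = partialPrimitive lam ii g h m k := by
  have hk : ii k ≤ ii (k + 1) := hii k.le_succ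
  have hblock : ∑ n ∈ Finset.Ico (ii k) (ii (k + 1)), bondOrZero lam m n (g n)
      = bondOrZero lam m (ii k) (h k) - bondOrZero lam m (ii (k + 1)) (h (k + 1)) := by
    rw [← bondOrZero_bondOrZero hmk hk, ← map_sub, ← hlam']
    change _ = bondOrZero lam m (ii k) (delta _ lam' h k)
    rw [hgh, collapse_apply, map_sum]
    exact Finset.sum_congr rfl fun n hn =>
      (bondOrZero_bondOrZero hmk (Finset.mem_Ico.mp hn).1 _).symm
  rw [partialPrimitive, partialPrimitive, ← Finset.sum_Ico_consecutive _ hmk hk, hblock]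
  abel

lemma mem_range_delta_of_collapse_mem_range (hii : StrictMono ii)
    (hlam' : ∀ k, lam' k = bondOrZero lam (ii k) (ii (k + 1))) {g : ∀ i, A i}
    (hg : collapse lam ii g ∈ (delta (fun k => A (ii k)) lam').range) :
    g ∈ (delta A lam).range := by
  obtain ⟨h, hgh⟩ := hg
  have hstable : ∀ m k k', m ≤ ii k → k ≤ k' →
      partialPrimitive lam ii g h m k' = partialPrimitive lam ii g h m k := by
    intro m k k' hmk hkk'
    induction k', hkk' using Nat.le_induction with
    | base => rfl
    | succ k' hkk' ih =>
      rw [partialPrimitive_succ hii.monotone hlam' hgh (hmk.trans (hii.monotone hkk')), ih]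
  refine ⟨fun m => partialPrimitive lam ii g h m m, funext fun m => ?_⟩
  change partialPrimitive lam ii g h m m - lam m (partialPrimitive lam ii g h (m + 1) (m + 1))
    = g m
  rw [lam_partialPrimitive g h (m.lt_succ_self.trans_le (hii.id_le _)),
    hstable m m (m + 1) (hii.id_le m) m.le_succ]
  abel

variable (lam') in
noncomputable def lim1Collapse (hii : Monotone ii)
    (hlam' : ∀ k, lam' k = bondOrZero lam (ii k) (ii (k + 1))) :
    lim1 A lam →+ lim1 (fun k => A (ii k)) lam' :=
  QuotientAddGroup.map _ _ (collapse lam ii) <| by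
    rintro _ ⟨g, rfl⟩
    exact ⟨_, (collapse_delta hii hlam' g).symm⟩

lemma lim1Collapse_bijective (hii : StrictMono ii)
    (hlam' : ∀ k, lam' k = bondOrZero lam (ii k) (ii (k + 1))) :
    Function.Bijective (lim1Collapse lam' hii.monotone hlam') := by
  constructor
  · rw [injective_iff_map_eq_zero]
    rintro ⟨g⟩ hg
    exact (QuotientAddGroup.eq_zero_iff g).mpr <| mem_range_delta_of_collapse_mem_range hii hlam'
      ((QuotientAddGroup.eq_zero_iff _).mp hg)
  · rintro ⟨h⟩
    exact ⟨QuotientAddGroup.mk (extendZero ii h), congrArg QuotientAddGroup.mk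
      (collapse_extendZero hii h)⟩

variable (lam') in
noncomputable def lim1SubseqEquiv (hii : StrictMono ii)
    (hlam' : ∀ k, lam' k = bondOrZero lam (ii k) (ii (k + 1))) :
    lim1 A lam ≃+ lim1 (fun k => A (ii k)) lam' :=
  AddEquiv.ofBijective _ (lim1Collapse_bijective hii hlam')

end Subsequence

section Ladder

variable {P Q : ℕ → Type u} [∀ k, AddCommGroup (P k)] [∀ k, AddCommGroup (Q k)]
  (u : ∀ k, Q k →+ P k) (d : ∀ k, P (k + 1) →+ Q k)

def ladderDown : (∀ k, P k) →+ (∀ k, Q k) :=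
  AddMonoidHom.pi fun k => (d k).comp (Pi.evalAddMonoidHom P (k + 1))

def ladderUp : (∀ k, Q k) →+ (∀ k, P k) :=
  AddMonoidHom.piMap u

lemma delta_eq_id_sub_ladderUp_comp_ladderDown :
    delta P (fun k => (u k).comp (d k)) = AddMonoidHom.id _ - (ladderUp u).comp (ladderDown d) :=
  rfl

lemma delta_eq_id_sub_ladderDown_comp_ladderUp :
    delta Q (fun k => (d k).comp (u (k + 1)))
      = AddMonoidHom.id _ - (ladderDown d).comp (ladderUp u) :=
  rfl

lemma ladderDown_comp_delta :
    (ladderDown d).comp (delta P fun k => (u k).comp (d k))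
      = (delta Q fun k => (d k).comp (u (k + 1))).comp (ladderDown d) := by
  rw [delta_eq_id_sub_ladderUp_comp_ladderDown u d, delta_eq_id_sub_ladderDown_comp_ladderUp u d,
    AddMonoidHom.comp_sub, AddMonoidHom.sub_comp]
  rfl

lemma ladderUp_comp_delta :
    (ladderUp u).comp (delta Q fun k => (d k).comp (u (k + 1)))
      = (delta P fun k => (u k).comp (d k)).comp (ladderUp u) := by
  rw [delta_eq_id_sub_ladderUp_comp_ladderDown u d, delta_eq_id_sub_ladderDown_comp_ladderUp u d,
    AddMonoidHom.comp_sub, AddMonoidHom.sub_comp]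
  rfl

def lim1LadderEquiv :
    lim1 P (fun k => (u k).comp (d k)) ≃+ lim1 Q (fun k => (d k).comp (u (k + 1))) :=
  AddMonoidHom.toAddEquiv
    (QuotientAddGroup.map _ _ (ladderDown d) <| by
      rintro _ ⟨g, rfl⟩
      exact ⟨ladderDown d g, (DFunLike.congr_fun (ladderDown_comp_delta u d) g).symm⟩)
    (QuotientAddGroup.map _ _ (ladderUp u) <| by
      rintro _ ⟨h, rfl⟩
      exact ⟨ladderUp u h, (DFunLike.congr_fun (ladderUp_comp_delta u d) h).symm⟩)
    (QuotientAddGroup.addMonoidHom_ext _ <| AddMonoidHom.ext fun g =>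
      (QuotientAddGroup.eq_iff_sub_mem).mpr ⟨-g, by
        rw [map_neg, delta_eq_id_sub_ladderUp_comp_ladderDown]; simp⟩)
    (QuotientAddGroup.addMonoidHom_ext _ <| AddMonoidHom.ext fun h =>
      (QuotientAddGroup.eq_iff_sub_mem).mpr ⟨-h, by
        rw [map_neg, delta_eq_id_sub_ladderDown_comp_ladderUp]; simp⟩)

end Ladder

/-- Pro-isomorphic inverse sequences of abelian groups have isomorphic derived limits. -/
theorem lim1_addEquiv_of_isProIso (A : ℕ → Type u) [∀ i, AddCommGroup (A i)]
    (lam : ∀ i, A (i + 1) →+ A i)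
    (B : ℕ → Type u) [∀ j, AddCommGroup (B j)] (mu : ∀ j, B (j + 1) →+ B j)
    (h : IsProIso A lam B mu) :
    Nonempty (lim1 A lam ≃+ lim1 B mu) := by
  obtain ⟨ii, jj, hii, hjj, up, dn, hud, hdu⟩ := h
  refine ⟨(lim1SubseqEquiv _ hii fun k => ?_).trans
    ((lim1LadderEquiv up dn).trans (lim1SubseqEquiv _ hjj fun k => ?_).symm)⟩
  · rw [hud, bondOrZero_of_le]
  · rw [hdu, bondOrZero_of_le]
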